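/- If α is a normalized 3-cocycle of a group G valued in k* and α(f|g,h) := α(f,g,h)·α(^f g,f,h)^{-1}·α(^f g,^f h,f), then α(g,h,u)·α(f|gh,u)·α(f|g,h) = α(f|g,hu)·α(f|h,u)·α(fgf^{-1}, fhf^{-1}, fuf^{-1}) for all f,g,h,u ∈ G. -/

import Mathlib

/-- `α(f|g,h) = α(f,g,h) · α(fgf⁻¹, f, h)⁻¹ · α(fgf⁻¹, fhf⁻¹, f)`. -/
def aux1 {G : Type*} [Group G] {k : Type*} [Field k]
    (α : G → G → G → kˣ) (f g h : G) : kˣ :=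
  α f g h * (α (f * g * f⁻¹) f h)⁻¹ * α (f * g * f⁻¹) (f * h * f⁻¹) f

section

variable {G M : Type*} [Group G] [CommGroup M]

def IsThreeCocycle (α : G → G → G → M) : Prop :=
  ∀ f g h l, α g h l * α f (g * h) l * α f g h = α (f * g) h l * α f g (h * l)

def conjTwist (α : G → G → G → M) (f g h : G) : M :=
  α f g h * (α (f * g * f⁻¹) f h)⁻¹ * α (f * g * f⁻¹) (f * h * f⁻¹) f

/-- The 2-cochain `α(f|-,-)` has coboundary `α / (α ∘ conjugation by f)`. -/
theorem IsThreeCocycle.coboundary_conjTwist {α : G → G → G → M} (hα : IsThreeCocycle α)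
    (f g h u : G) :
    α g h u * conjTwist α f (g * h) u * conjTwist α f g h
      = conjTwist α f g (h * u) * conjTwist α f h u
          * α (f * g * f⁻¹) (f * h * f⁻¹) (f * u * f⁻¹) := by
  have h₁ := hα f g h u
  have h₂ := hα (f * g * f⁻¹) f h u
  have h₃ := hα (f * g * f⁻¹) (f * h * f⁻¹) f u
  have h₄ := hα (f * g * f⁻¹) (f * h * f⁻¹) (f * u * f⁻¹) f
  simp only [inv_mul_cancel_right, conj_mul] at h₂ h₃ h₄
  apply_fun Additive.ofMul at h₁ h₂ h₃ h₄ ⊢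
  simp only [conjTwist, ofMul_mul, ofMul_inv] at h₁ h₂ h₃ h₄ ⊢
  linear_combination (norm := abel) h₁ - h₂ + h₃ - h₄

end

theorem stmt2_general {G : Type*} [Group G] {k : Type*} [Field k] (α : G → G → G → kˣ)
    (hcoc : ∀ f g h l : G,
      α g h l * α f (g * h) l * α f g h = α (f * g) h l * α f g (h * l))
    (f g h u : G) :
    α g h u * aux1 α f (g * h) u * aux1 α f g h
      = aux1 α f g (h * u) * aux1 α f h u
          * α (f * g * f⁻¹) (f * h * f⁻¹) (f * u * f⁻¹) :=
  IsThreeCocycle.coboundary_conjTwist hcoc f g h u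

/-- for a normalized 3-cocycle `α` on `G` valued in `k*`,
`α(g,h,u)·α(f|gh,u)·α(f|g,h) = α(f|g,hu)·α(f|h,u)·α(fgf⁻¹, fhf⁻¹, fuf⁻¹)`. -/
theorem stmt2 {G : Type*} [Group G] {k : Type*} [Field k] (α : G → G → G → kˣ)
    (hcoc : ∀ f g h l : G,
      α g h l * α f (g * h) l * α f g h = α (f * g) h l * α f g (h * l))
    (hnorm : ∀ f g h : G, f = 1 ∨ g = 1 ∨ h = 1 → α f g h = 1)
    (f g h u : G) :
    α g h u * aux1 α f (g * h) u * aux1 α f g h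
      = aux1 α f g (h * u) * aux1 α f h u
          * α (f * g * f⁻¹) (f * h * f⁻¹) (f * u * f⁻¹) :=
  stmt2_general α hcoc f g h u
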